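/- arXiv:1708.09288 — 3 statements merged into one kernel-verified Lean document; each statement's English description precedes it below -/
import Mathlib

section
/- If v is any row vector in ℝ⁵ with nonnegative entries summing to 1 such that v ⬝ P = v, then v = π = (1/2, 1/6, 1/12, 1/4, 0); that is, π is the unique stationary distribution of P. -/
open Matrix Filter Topology

noncomputable def P : Matrix (Fin 5) (Fin 5) ℝ :=
  !![1/3, 1/6, 1/6, 1/3, 0;
     1/2,   0,   0, 1/2, 0;
       0,   1,   0,   0, 0;
       1,   0,   0,   0, 0;
       1,   0,   0,   0, 0]

noncomputable def pivec : Fin 5 → ℝ := ![1/2, 1/6, 1/12, 1/4, 0]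

/-- No state leads to state `4`, and states `0`–`3` communicate, so the fixed row vectors of `P`
form a line, spanned by `pivec`. -/
theorem eq_smul_pivec_of_stationary {v : Fin 5 → ℝ}
    (hstat : ∀ j : Fin 5, ∑ i : Fin 5, v i * P i j = v j) :
    v = (2 * v 0) • pivec := by
  have h0 := hstat 0
  have h1 := hstat 1
  have h2 := hstat 2
  have h3 := hstat 3
  have h4 := hstat 4
  simp only [P, Fin.sum_univ_five, of_apply, cons_val', cons_val_zero, cons_val_one, cons_val,
    cons_val_fin_one, mul_zero, add_zero, mul_one] at h0 h1 h2 h3 h4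
  funext i
  fin_cases i <;>
    simp only [Fin.zero_eta, Fin.mk_one, Fin.reduceFinMk, pivec, Pi.smul_apply, smul_eq_mul,
      cons_val_zero, cons_val_one, cons_val, mul_zero] <;>
    linarith

theorem sum_pivec : ∑ i : Fin 5, pivec i = 1 := by
  simp only [pivec, Fin.sum_univ_five, cons_val_zero, cons_val_one, cons_val]
  norm_num

theorem eq_of_eq_smul_of_sum_eq_one {ι R : Type*} [Fintype ι] [Semiring R] {v π : ι → R}
    {c : R} (hline : v = c • π) (hv : ∑ i, v i = 1) (hπ : ∑ i, π i = 1) : v = π := by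
  have hc : c = 1 := by
    rw [hline] at hv
    simpa only [Pi.smul_apply, smul_eq_mul, ← Finset.mul_sum, hπ, mul_one] using hv
  rw [hline, hc, one_smul]

theorem stationary_unique_general (v : Fin 5 → ℝ)
    (hsum : ∑ i : Fin 5, v i = 1)
    (hstat : ∀ j : Fin 5, ∑ i : Fin 5, v i * P i j = v j) :
    v = pivec :=
  eq_of_eq_smul_of_sum_eq_one (eq_smul_pivec_of_stationary hstat) hsum sum_pivec

theorem stationary_unique (v : Fin 5 → ℝ)
    (hnonneg : ∀ i : Fin 5, 0 ≤ v i) (hsum : ∑ i : Fin 5, v i = 1)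
    (hstat : ∀ j : Fin 5, ∑ i : Fin 5, v i * P i j = v j) :
    v = pivec :=
  stationary_unique_general v hsum hstat
end

section
/- For every row vector v in ℝ⁵ with nonnegative entries summing to 1 (an initial probability distribution over the five states), the sequence of row vectors v ⬝ Pⁿ converges entrywise to π = (1/2, 1/6, 1/12, 1/4, 0) as n → ∞. -/
/-!
The matrix `Π = 1 πᵀ`, all of whose rows equal `π`, is idempotent and absorbs `P` on both sides,
because `P` is stochastic and `π` is stationary. Hence `Pⁿ - Π = (P - Π)ⁿ` for `n ≥ 1`, and the
max-row-sum norm of `(P - Π)²` is `1/2`, so `Pⁿ → Π` geometrically. Every initial distribution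
`v` then satisfies `v Pⁿ → v Π = (∑ᵢ vᵢ) π = π`.
-/

open Matrix Filter Topology

theorem tendsto_pow_atTop_nhds_zero_of_norm_pow_lt_one {R : Type*} [SeminormedRing R] {a : R}
    {m : ℕ} (hm : 0 < m) (h : ‖a ^ m‖ < 1) : Tendsto (a ^ ·) atTop (𝓝 0) := by
  have hdecomp : (a ^ ·) = fun n => (a ^ m) ^ (n / m) * a ^ (n % m) := by
    ext n
    rw [← pow_mul, ← pow_add, Nat.div_add_mod]
  have hgeom : Tendsto (fun n => (a ^ m) ^ (n / m)) atTop (𝓝 0) :=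
    (tendsto_pow_atTop_nhds_zero_of_norm_lt_one h).comp (Nat.tendsto_div_const_atTop hm.ne')
  have hmod (n : ℕ) : ‖a ^ (n % m)‖ ≤ ∑ k ∈ Finset.range m, ‖a ^ k‖ :=
    Finset.single_le_sum (f := fun k => ‖a ^ k‖) (fun _ _ => norm_nonneg _)
      (Finset.mem_range.2 (Nat.mod_lt n hm))
  rw [hdecomp]
  exact hgeom.zero_mul_isBoundedUnder_le ⟨_, eventually_map.2 (Eventually.of_forall hmod)⟩

theorem sub_pow_succ_of_idempotent {R : Type*} [Ring R] {a e : R} (he : e * e = e)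
    (hae : a * e = e) (hea : e * a = e) (n : ℕ) : (a - e) ^ (n + 1) = a ^ (n + 1) - e := by
  have hpow (k : ℕ) : a ^ k * e = e := by
    induction k with
    | zero => rw [pow_zero, one_mul]
    | succ k ih => rw [pow_succ', mul_assoc, ih, hae]
  induction n with
  | zero => rw [zero_add, pow_one, pow_one]
  | succ n ih =>
    rw [pow_succ, ih, pow_succ a (n + 1), sub_mul, mul_sub, mul_sub, hpow, hea, he]
    abel

theorem tendsto_pow_atTop_nhds_of_idempotent_of_norm_pow_sub_lt_one {R : Type*}
    [SeminormedRing R] {a e : R} (he : e * e = e) (hae : a * e = e) (hea : e * a = e) {m : ℕ}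
    (hm : 0 < m) (h : ‖a ^ m - e‖ < 1) : Tendsto (a ^ ·) atTop (𝓝 e) := by
  obtain ⟨k, rfl⟩ : ∃ k, m = k + 1 := ⟨m - 1, by omega⟩
  rw [← sub_pow_succ_of_idempotent he hae hea] at h
  have hlim := ((tendsto_pow_atTop_nhds_zero_of_norm_pow_lt_one hm h).comp
    (tendsto_add_atTop_nat 1)).add_const e
  rw [zero_add] at hlim
  refine (tendsto_add_atTop_iff_nat 1).1 (hlim.congr fun n => ?_)
  rw [Function.comp_apply, sub_pow_succ_of_idempotent he hae hea, sub_add_cancel]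

section LinftyOpNorm

attribute [local instance] Matrix.linftyOpSeminormedAddCommGroup Matrix.linftyOpSemiNormedRing

theorem Matrix.linfty_opNorm_le_of_forall_sum_le {m n α : Type*} [Fintype m] [Fintype n]
    [SeminormedAddCommGroup α] {A : Matrix m n α} {c : ℝ} (hc : 0 ≤ c)
    (h : ∀ i, ∑ j, ‖A i j‖ ≤ c) : ‖A‖ ≤ c := by
  rw [linfty_opNorm_def, ← NNReal.coe_mk c hc, NNReal.coe_le_coe]
  refine Finset.sup_le fun i _ => ?_
  rw [← NNReal.coe_le_coe]
  simpa using h i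

theorem Matrix.tendsto_pow_vecMulVec_one_of_norm_pow_sub_lt_one {n α : Type*} [Fintype n]
    [DecidableEq n] [SeminormedRing α] {M : Matrix n n α} {π : n → α} (hM : M *ᵥ 1 = 1)
    (hπM : π ᵥ* M = π) (hπ : π ⬝ᵥ 1 = 1) {m : ℕ} (hm : 0 < m)
    (h : ‖M ^ m - vecMulVec (1 : n → α) π‖ < 1) :
    Tendsto (M ^ ·) atTop (𝓝 (vecMulVec (1 : n → α) π)) :=
  tendsto_pow_atTop_nhds_of_idempotent_of_norm_pow_sub_lt_one
    (by rw [vecMulVec_mul_vecMulVec, hπ, one_smul]) (by rw [mul_vecMulVec, hM])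
    (by rw [vecMulVec_mul, hπM]) hm h

theorem P_mulVec_one : P *ᵥ 1 = 1 := by
  ext i
  fin_cases i <;> simp [P, mulVec, dotProduct, Fin.sum_univ_five] <;> norm_num

theorem pivec_vecMul_P : pivec ᵥ* P = pivec := by
  ext j
  fin_cases j <;> simp [P, pivec, vecMul, dotProduct, Fin.sum_univ_five] <;> norm_num

theorem pivec_dotProduct_one : pivec ⬝ᵥ 1 = 1 := by
  simp only [pivec, dotProduct_one, Fin.sum_univ_five, cons_val_zero, cons_val_one, cons_val]
  norm_num

theorem norm_P_sq_sub_vecMulVec_one_pivec_le :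
    ‖P ^ 2 - vecMulVec (1 : Fin 5 → ℝ) pivec‖ ≤ 1 / 2 := by
  refine linfty_opNorm_le_of_forall_sum_le (by norm_num) fun i => ?_
  fin_cases i <;> simp [sq, P, pivec, Fin.sum_univ_five] <;>
    norm_num [abs_of_nonneg, abs_of_nonpos]

theorem tendsto_P_pow : Tendsto (P ^ ·) atTop (𝓝 (vecMulVec (1 : Fin 5 → ℝ) pivec)) :=
  tendsto_pow_vecMulVec_one_of_norm_pow_sub_lt_one P_mulVec_one pivec_vecMul_P
    pivec_dotProduct_one two_pos (norm_P_sq_sub_vecMulVec_one_pivec_le.trans_lt (by norm_num))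

end LinftyOpNorm

theorem initial_distribution_tendsto_stationary :
    ∀ v : Fin 5 → ℝ, (∀ i : Fin 5, 0 ≤ v i) → (∑ i : Fin 5, v i = 1) →
      ∀ j : Fin 5,
        Tendsto (fun n : ℕ => (v ᵥ* (P ^ n)) j) atTop (𝓝 (pivec j)) := by
  intro v _ hv j
  have hcont : Continuous fun M : Matrix (Fin 5) (Fin 5) ℝ => (v ᵥ* M) j :=
    (continuous_apply j).comp (continuous_const.matrix_vecMul continuous_id)
  have hlim := hcont.continuousAt.tendsto.comp tendsto_P_pow
  rwa [Function.comp_def, vecMul_vecMulVec, dotProduct_one, hv, one_smul] at hlim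
end

section
/- The number 1 is an eigenvalue of P (viewed as a complex matrix), and every complex eigenvalue λ of P with λ ≠ 1 satisfies |λ| < 1. -/
open Matrix Filter Topology

/-! The characteristic polynomial of `P` is `z (z - 1) (2 z + 1) (6 z ^ 2 + z + 1) / 12`, so the
eigenvalues other than `1` are `0`, `-1 / 2` and the two roots of `6 z ^ 2 + z + 1`; the latter
satisfy `6 ‖z‖ ^ 2 = ‖z + 1‖ ≤ ‖z‖ + 1`, hence `‖z‖ ≤ 1 / 2`. -/

lemma eval_charpoly_map_P (z : ℂ) :
    (P.map Complex.ofReal).charpoly.eval z =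
      z * (z - 1) * (2 * z + 1) * (6 * z ^ 2 + z + 1) / 12 := by
  rw [eval_charpoly, det_succ_row_zero]
  simp [P, Fin.sum_univ_succ, det_succ_row_zero, Fin.succAbove, submatrix]
  ring

lemma mem_spectrum_map_P_iff (z : ℂ) :
    z ∈ spectrum ℂ (P.map Complex.ofReal) ↔
      z = 0 ∨ z = 1 ∨ z = -1 / 2 ∨ 6 * z ^ 2 + z + 1 = 0 := by
  have linear_root : 2 * z + 1 = 0 ↔ z = -1 / 2 :=
    ⟨fun h => by linear_combination h / 2, fun h => by linear_combination 2 * h⟩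
  rw [mem_spectrum_iff_isRoot_charpoly, Polynomial.IsRoot, eval_charpoly_map_P]
  simp only [div_eq_zero_iff, mul_eq_zero, sub_eq_zero, linear_root, OfNat.ofNat_ne_zero,
    or_false, or_assoc]

lemma Complex.norm_le_half_of_six_mul_sq_add_add_one_eq_zero {z : ℂ}
    (hz : 6 * z ^ 2 + z + 1 = 0) : ‖z‖ ≤ 1 / 2 := by
  have key : 6 * ‖z‖ ^ 2 ≤ ‖z‖ + 1 := by
    calc 6 * ‖z‖ ^ 2 = ‖6 * z ^ 2‖ := by simp
      _ = ‖z + 1‖ := by rw [show 6 * z ^ 2 = -(z + 1) by linear_combination hz, norm_neg]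
      _ ≤ ‖z‖ + 1 := by simpa using norm_add_le z 1
  -- `6 r ^ 2 - r - 1 = (3 r + 1) (2 r - 1)`
  nlinarith [norm_nonneg z]

theorem spectrum_of_P :
    (1 : ℂ) ∈ spectrum ℂ (P.map (Complex.ofReal)) ∧
      ∀ lam : ℂ, lam ∈ spectrum ℂ (P.map (Complex.ofReal)) → lam ≠ 1 →
        ‖lam‖ < 1 := by
  refine ⟨(mem_spectrum_map_P_iff 1).2 (.inr (.inl rfl)), fun lam hlam hne => ?_⟩
  rcases (mem_spectrum_map_P_iff lam).1 hlam with rfl | rfl | rfl | hquad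
  · simp
  · exact absurd rfl hne
  · norm_num
  · linarith [Complex.norm_le_half_of_six_mul_sq_add_add_one_eq_zero hquad]
end
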